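/- arXiv:2311.16816 — 3 statements merged into one kernel-verified Lean document; each statement's English description precedes it below -/
import Mathlib

section
/- Let k, t ≥ 1 be integers and let D be a digraph admitting a directed tree-decomposition (T, β, γ) with |Γ(t')| ≤ k for every node t' ∈ V(T) (i.e. of width less than k). Then either D contains t pairwise vertex-disjoint even dicycles, or there exists a set A ⊆ V(D) with |A| ≤ k(t−1) such that D − A contains no even dicycle. -/
/-- A dicycle (directed cycle) of length `len ≥ 2` in the digraph on `V` with adjacency
relation `D`: a cyclic sequence of `len` distinct vertices with an edge from each vertex
to the next one (indices modulo `len`). -/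
structure Dicycle {V : Type} (D : V → V → Prop) : Type where
  len : ℕ
  two_le_len : 2 ≤ len
  vtx : ℕ → V
  inj : ∀ i < len, ∀ j < len, vtx i = vtx j → i = j
  adj : ∀ i < len, D (vtx i) (vtx ((i + 1) % len))

/-- The set of vertices lying on a dicycle. -/
def Dicycle.support {V : Type} {D : V → V → Prop} (c : Dicycle D) : Set V :=
  {v | ∃ i < c.len, c.vtx i = v}

/-- A dicycle is even if its length is even. -/
def Dicycle.IsEven {V : Type} {D : V → V → Prop} (c : Dicycle D) : Prop :=
  Even c.len

/-- A quarter-integral packing of `k` even dicycles in the digraph `D`: a family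
of `k` even dicycles such that every vertex lies on at most four of them. -/
def QuarterPacking {V : Type} (D : V → V → Prop) (k : ℕ) : Prop :=
  ∃ C : Fin k → Dicycle D,
    (∀ i, (C i).IsEven) ∧ ∀ v : V, {i : Fin k | v ∈ (C i).support}.ncard ≤ 4

/-- `Y` strongly guards `X` in `D`: every directed walk that starts and ends in `X`
and contains a vertex outside of `X` contains a vertex of `Y`. -/
def StronglyGuards {V : Type} (D : V → V → Prop) (Y X : Set V) : Prop :=
  ∀ (a : V) (w : List V), List.Chain D a w →
    a ∈ X → (a :: w).getLast (List.cons_ne_nil a w) ∈ X →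
    (∃ v ∈ a :: w, v ∉ X) → ∃ v ∈ a :: w, v ∈ Y

/-- A directed tree-decomposition of the digraph `D`.  The underlying arborescence is
encoded by a finite node type `T`, a root, and a parent function under whose iteration
every node reaches the root; the edges of the arborescence are the pairs
`(parent t, t)` for `t ≠ root`.  The (possibly empty) bags partition the vertex set, and
for every edge `(parent t, t)` the guard set `guard t` strongly guards the union of the
bags of the subtree rooted at `t`. -/
structure DirTreeDecomp {V : Type} (D : V → V → Prop) : Type 1 where
  T : Type
  fintypeT : Fintype T
  root : T
  parent : T → T
  parent_root : parent root = root
  reaches_root : ∀ t : T, ∃ n : ℕ, parent^[n] t = root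
  bag : T → Set V
  guard : T → Set V
  bag_disjoint : ∀ s t : T, s ≠ t → Disjoint (bag s) (bag t)
  bag_union : (⋃ t : T, bag t) = Set.univ
  guards : ∀ t : T, t ≠ root →
    StronglyGuards D (guard t)
      (⋃ s ∈ {s : T | ∃ n : ℕ, parent^[n] s = t}, bag s)

/-- `β(T_t)`: the union of the bags of the subtree rooted at `t`. -/
def DirTreeDecomp.subtreeBag {V : Type} {D : V → V → Prop} (𝒯 : DirTreeDecomp D)
    (t : 𝒯.T) : Set V :=
  ⋃ s ∈ {s : 𝒯.T | ∃ n : ℕ, 𝒯.parent^[n] s = t}, 𝒯.bag s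

/-- `Γ(t)`: the bag of `t` together with the guards of all edges incident with `t`,
i.e. the guard of the edge into `t` (when `t` is not the root) and the guards of the
edges into the children of `t`. -/
def DirTreeDecomp.Gam {V : Type} {D : V → V → Prop} (𝒯 : DirTreeDecomp D)
    (t : 𝒯.T) : Set V :=
  𝒯.bag t ∪ (⋃ s ∈ {s : 𝒯.T | s ≠ 𝒯.root ∧ (s = t ∨ 𝒯.parent s = t)}, 𝒯.guard s)

/-! Induction on the number of dicycles. Among the nodes `s` whose subtree bags `β(T_s)` contain
an even dicycle, take one of maximal depth. An even dicycle avoiding `Γ(s)` cannot meet `β(T_s)`: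
it would miss `β(s) ⊆ Γ(s)`, so it would meet `β(T_c)` for a child `c`, and since the guard of
`(s, c)` lies in `Γ(s)` and strongly guards `β(T_c)`, it would lie entirely inside `β(T_c)`,
against the maximality of `s`. Hence either the even dicycle in `β(T_s)` extends a packing of even
dicycles of `D − (β(T_s) ∪ Γ(s))`, or `Γ(s)`, of size at most `k`, extends a hitting set for
them. -/

open Function

theorem Fin.pairwise_disjoint_on_cons {α β : Type*} {n : ℕ} (g : α → Set β) {a : α}
    {f : Fin n → α} (ha : ∀ i, Disjoint (g a) (g (f i)))
    (hf : Pairwise (Disjoint on fun i => g (f i))) :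
    Pairwise (Disjoint on fun i => g ((Fin.cons a f : Fin (n + 1) → α) i)) := by
  intro i j hij
  cases i using Fin.cases with
  | zero =>
    cases j using Fin.cases with
    | zero => exact absurd rfl hij
    | succ j => simpa [Function.onFun] using ha j
  | succ i =>
    cases j using Fin.cases with
    | zero => simpa [Function.onFun] using (ha i).symm
    | succ j => simpa [Function.onFun] using hf (ne_of_apply_ne Fin.succ hij)

section

variable {V : Type} {D : V → V → Prop}

theorem StronglyGuards.exists_mem_of_isChain {X Y : Set V} (hG : StronglyGuards D Y X)
    {l : List V} (hl : l.IsChain D) {a b : V} (ha : l.head? = some a) (hb : l.getLast? = some b)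
    (haX : a ∈ X) (hbX : b ∈ X) (hout : ∃ v ∈ l, v ∉ X) : ∃ v ∈ l, v ∈ Y := by
  cases l with
  | nil => simp at ha
  | cons a' w =>
    obtain rfl : a' = a := by simpa using ha
    rw [List.getLast?_eq_some_getLast (List.cons_ne_nil a' w), Option.some_inj] at hb
    exact hG a' w hl haX (hb ▸ hbX) hout

theorem Dicycle.exists_closedWalk (c : Dicycle D) {x : V} (hx : x ∈ c.support) :
    ∃ l : List V, l.IsChain D ∧ l.head? = some x ∧ l.getLast? = some x ∧
      ∀ v, v ∈ l ↔ v ∈ c.support := by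
  obtain ⟨i, hi, rfl⟩ := hx
  have hpos : 0 < c.len := lt_of_lt_of_le two_pos c.two_le_len
  set g : ℕ → V := fun m => c.vtx ((i + m) % c.len)
  refine ⟨(List.range (c.len + 1)).map g, ?_, ?_, ?_, fun v => ?_⟩
  · refine (List.isChain_map g).2 ((List.isChain_range_succ _ _).2 fun m _ => ?_)
    simpa [g, Nat.mod_add_mod, add_assoc] using c.adj _ (Nat.mod_lt (i + m) hpos)
  · simp [g, List.range_succ_eq_map, Nat.mod_eq_of_lt hi]
  · simp [g, List.range_succ, Nat.mod_eq_of_lt hi]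
  · simp only [List.mem_map, List.mem_range, Dicycle.support, Set.mem_ofPred_eq, g]
    constructor
    · rintro ⟨m, -, rfl⟩
      exact ⟨_, Nat.mod_lt _ hpos, rfl⟩
    · rintro ⟨j, hj, rfl⟩
      refine ⟨(j + c.len - i) % c.len, (Nat.mod_lt _ hpos).trans (Nat.lt_succ_self _), ?_⟩
      rw [Nat.add_mod_mod, show i + (j + c.len - i) = j + c.len by omega, Nat.add_mod_right,
        Nat.mod_eq_of_lt hj]

theorem StronglyGuards.support_subset_of_disjoint {X Y : Set V} (hG : StronglyGuards D Y X)
    (c : Dicycle D) (hY : Disjoint c.support Y) {x : V} (hxc : x ∈ c.support) (hxX : x ∈ X) :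
    c.support ⊆ X := by
  intro v hv
  by_contra hvX
  obtain ⟨l, hl, hhead, hlast, hmem⟩ := c.exists_closedWalk hxc
  obtain ⟨y, hyl, hyY⟩ :=
    hG.exists_mem_of_isChain hl hhead hlast hxX hxX ⟨v, (hmem v).2 hv, hvX⟩
  exact hY.notMem_of_mem_left ((hmem y).1 hyl) hyY

namespace DirTreeDecomp

variable (𝒯 : DirTreeDecomp D)

theorem subtreeBag_root : 𝒯.subtreeBag 𝒯.root = Set.univ :=
  Set.eq_univ_of_forall fun v => by
    obtain ⟨s, hv⟩ := Set.mem_iUnion.1 (𝒯.bag_union.symm ▸ Set.mem_univ v)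
    exact Set.mem_biUnion (𝒯.reaches_root s) hv

theorem bag_subset_Gam (t : 𝒯.T) : 𝒯.bag t ⊆ 𝒯.Gam t :=
  Set.subset_union_left

theorem guard_subset_Gam_parent {t : 𝒯.T} (ht : t ≠ 𝒯.root) :
    𝒯.guard t ⊆ 𝒯.Gam (𝒯.parent t) :=
  fun _ hv => Or.inr (Set.mem_biUnion ⟨ht, Or.inr rfl⟩ hv)

theorem exists_child_of_iterate_parent_eq {s : 𝒯.T} :
    ∀ (n : ℕ) (u : 𝒯.T), 𝒯.parent^[n] u = s → u ≠ s →
      ∃ ch, 𝒯.parent ch = s ∧ ch ≠ s ∧ ∃ m, 𝒯.parent^[m] u = ch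
  | 0, _, hu, hne => absurd hu hne
  | n + 1, u, hu, hne => by
    rw [Function.iterate_succ_apply] at hu
    by_cases hpu : 𝒯.parent u = s
    · exact ⟨u, hpu, hne, 0, rfl⟩
    · obtain ⟨ch, hch, hchs, m, hm⟩ := exists_child_of_iterate_parent_eq n _ hu hpu
      exact ⟨ch, hch, hchs, m + 1, hm⟩

theorem exists_child_of_mem_subtreeBag {s : 𝒯.T} {v : V} (hv : v ∈ 𝒯.subtreeBag s)
    (hvs : v ∉ 𝒯.bag s) :
    ∃ ch, 𝒯.parent ch = s ∧ ch ≠ 𝒯.root ∧ v ∈ 𝒯.subtreeBag ch := by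
  obtain ⟨u, ⟨n, hn⟩, hvu⟩ := Set.mem_iUnion₂.1 hv
  obtain ⟨ch, hch, hchs, m, hm⟩ :=
    𝒯.exists_child_of_iterate_parent_eq n u hn (by rintro rfl; exact hvs hvu)
  refine ⟨ch, hch, fun hroot => hchs ?_, Set.mem_biUnion ⟨m, hm⟩ hvu⟩
  rw [← hch, hroot, 𝒯.parent_root]

noncomputable def depth (t : 𝒯.T) : ℕ :=
  sInf {n | 𝒯.parent^[n] t = 𝒯.root}

theorem depth_parent_lt {t : 𝒯.T} (ht : t ≠ 𝒯.root) : 𝒯.depth (𝒯.parent t) < 𝒯.depth t := by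
  have hreach : 𝒯.parent^[𝒯.depth t] t = 𝒯.root := Nat.sInf_mem (𝒯.reaches_root t)
  obtain ⟨d, hd⟩ : ∃ d, 𝒯.depth t = d + 1 :=
    Nat.exists_eq_succ_of_ne_zero fun h0 => ht (by rwa [h0] at hreach)
  rw [hd, Function.iterate_succ_apply] at hreach
  exact hd ▸ Nat.lt_succ_of_le (Nat.sInf_le hreach)

theorem disjoint_subtreeBag_of_disjoint_Gam {s : 𝒯.T} {c : Dicycle D}
    (hc : ∀ ch, 𝒯.parent ch = s → ch ≠ 𝒯.root → ¬ c.support ⊆ 𝒯.subtreeBag ch)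
    (hdisj : Disjoint c.support (𝒯.Gam s)) : Disjoint c.support (𝒯.subtreeBag s) := by
  refine Set.disjoint_left.2 fun v hvc hvs => ?_
  obtain ⟨ch, rfl, hch, hv⟩ := 𝒯.exists_child_of_mem_subtreeBag hvs
    fun hvb => hdisj.notMem_of_mem_left hvc (𝒯.bag_subset_Gam _ hvb)
  exact hc ch rfl hch <| (𝒯.guards ch hch).support_subset_of_disjoint c
    (hdisj.mono_right (𝒯.guard_subset_Gam_parent hch)) hvc hv

theorem exists_subtree_separated_by_Gam (P : Dicycle D → Prop) (hP : ∃ c, P c) :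
    ∃ s : 𝒯.T, (∃ c, P c ∧ c.support ⊆ 𝒯.subtreeBag s) ∧
      ∀ c, P c → Disjoint c.support (𝒯.Gam s) → Disjoint c.support (𝒯.subtreeBag s) := by
  have : Finite 𝒯.T := @Finite.of_fintype _ 𝒯.fintypeT
  obtain ⟨c₀, hc₀⟩ := hP
  obtain ⟨s, hs, hmax⟩ := Set.exists_max_image {s | ∃ c, P c ∧ c.support ⊆ 𝒯.subtreeBag s}
    𝒯.depth (Set.toFinite _) ⟨𝒯.root, c₀, hc₀, 𝒯.subtreeBag_root ▸ Set.subset_univ _⟩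
  refine ⟨s, hs, fun c hc => 𝒯.disjoint_subtreeBag_of_disjoint_Gam fun ch hch hroot hsub => ?_⟩
  have hdeep := 𝒯.depth_parent_lt hroot
  rw [hch] at hdeep
  exact (hmax ch ⟨c, hc, hsub⟩).not_gt hdeep

theorem exists_disjoint_evenDicycles_or_cover {k : ℕ} (hwidth : ∀ s, (𝒯.Gam s).ncard ≤ k)
    (n : ℕ) (U : Set V) :
    (∃ C : Fin (n + 1) → Dicycle D, (∀ i, (C i).IsEven ∧ (C i).support ⊆ U) ∧
        Pairwise (Disjoint on fun i => (C i).support)) ∨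
      ∃ A : Set V, A.ncard ≤ k * n ∧
        ∀ c : Dicycle D, c.IsEven → c.support ⊆ U → ¬ Disjoint c.support A := by
  by_cases h : ∃ c : Dicycle D, c.IsEven ∧ c.support ⊆ U
  swap
  · exact Or.inr ⟨∅, by simp, fun c hev hU _ => h ⟨c, hev, hU⟩⟩
  obtain ⟨s, ⟨c₀, ⟨hev₀, hU₀⟩, hsub₀⟩, hsep⟩ :=
    𝒯.exists_subtree_separated_by_Gam (fun c => c.IsEven ∧ c.support ⊆ U) h
  match n with
  | 0 => exact Or.inl ⟨fun _ => c₀, fun _ => ⟨hev₀, hU₀⟩, fun i j hij =>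
      absurd (Subsingleton.elim (α := Fin 1) i j) hij⟩
  | n + 1 =>
    rcases exists_disjoint_evenDicycles_or_cover hwidth n (U \ (𝒯.subtreeBag s ∪ 𝒯.Gam s)) with
      ⟨C, hC, hdisj⟩ | ⟨A, hA, hcover⟩
    · refine Or.inl ⟨Fin.cons c₀ C, Fin.forall_fin_succ.2 ⟨⟨hev₀, hU₀⟩, fun i =>
        ⟨(hC i).1, (hC i).2.trans Set.sdiff_subset⟩⟩,
        Fin.pairwise_disjoint_on_cons Dicycle.support (fun i => ?_) hdisj⟩
      exact (Set.disjoint_sdiff_right.mono_left Set.subset_union_left).mono hsub₀ (hC i).2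
    · refine Or.inr ⟨A ∪ 𝒯.Gam s, ?_, fun c hev hU hdisj => ?_⟩
      · calc (A ∪ 𝒯.Gam s).ncard ≤ A.ncard + (𝒯.Gam s).ncard := Set.ncard_union_le _ _
          _ ≤ k * n + k := add_le_add hA (hwidth s)
          _ = k * (n + 1) := by ring
      have hΓ : Disjoint c.support (𝒯.Gam s) := hdisj.mono_right Set.subset_union_right
      have hβ := hsep c ⟨hev, hU⟩ hΓ
      refine hcover c hev (fun v hv => ⟨hU hv, ?_⟩) (hdisj.mono_right Set.subset_union_left)
      rintro (hvβ | hvΓ)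
      exacts [hβ.notMem_of_mem_left hv hvβ, hΓ.notMem_of_mem_left hv hvΓ]

end DirTreeDecomp

end

theorem lowDirectedTreewidth_ErdosPosa_general
    (V : Type) (D : V → V → Prop)
    (k t : ℕ)
    (𝒯 : DirTreeDecomp D) (hwidth : ∀ s : 𝒯.T, (𝒯.Gam s).ncard ≤ k) :
    (∃ C : Fin t → Dicycle D, (∀ i, (C i).IsEven) ∧
        ∀ i j : Fin t, i ≠ j → Disjoint (C i).support (C j).support) ∨
      ∃ A : Set V, A.ncard ≤ k * (t - 1) ∧
        ∀ c : Dicycle D, Disjoint c.support A → ¬ c.IsEven := by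
  cases t with
  | zero => exact Or.inl ⟨Fin.elim0, fun i => i.elim0, fun i => i.elim0⟩
  | succ n =>
    rcases 𝒯.exists_disjoint_evenDicycles_or_cover hwidth n Set.univ with
      ⟨C, hC, hdisj⟩ | ⟨A, hA, hcover⟩
    · exact Or.inl ⟨C, fun i => (hC i).1, hdisj⟩
    · exact Or.inr ⟨A, hA, fun c hdisj hev => hcover c hev (Set.subset_univ _) hdisj⟩

/-- **Erdős–Pósa for even dicycles in digraphs of low directed treewidth.**
If `D` has a directed tree-decomposition all of whose sets `Γ(t)` have size at most `k`
(i.e. of width less than `k`), then `D` has `t` pairwise vertex-disjoint even dicycles,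
or a set `A` of at most `k·(t−1)` vertices such that `D − A` has no even dicycle. -/
theorem lowDirectedTreewidth_ErdosPosa
    (V : Type) [Fintype V] (D : V → V → Prop) (hD : Irreflexive D)
    (k t : ℕ) (hk : 1 ≤ k) (ht : 1 ≤ t)
    (𝒯 : DirTreeDecomp D) (hwidth : ∀ s : 𝒯.T, (𝒯.Gam s).ncard ≤ k) :
    (∃ C : Fin t → Dicycle D, (∀ i, (C i).IsEven) ∧
        ∀ i j : Fin t, i ≠ j → Disjoint (C i).support (C j).support) ∨
      ∃ A : Set V, A.ncard ≤ k * (t - 1) ∧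
        ∀ c : Dicycle D, Disjoint c.support A → ¬ c.IsEven :=
  lowDirectedTreewidth_ErdosPosa_general V D k t 𝒯 hwidth
end

section
/- Every digraph that contains an odd bicycle as a butterfly minor contains an even dicycle. -/
/-- A (simple, loopless) digraph living on a subset of the ambient vertex type `V`. -/
structure SubDigraph (V : Type) : Type where
  verts : Set V
  Adj : V → V → Prop
  adj_mem_left : ∀ u v, Adj u v → u ∈ verts
  adj_mem_right : ∀ u v, Adj u v → v ∈ verts
  loopless : ∀ v, ¬ Adj v v

/-- The digraph with adjacency `D` on all of `V`, viewed as a `SubDigraph`. -/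
def SubDigraph.ofAdj {V : Type} (D : V → V → Prop) (h : Irreflexive D) : SubDigraph V :=
  ⟨Set.univ, D, fun u _ _ => Set.mem_univ u, fun _ v _ => Set.mem_univ v, h⟩

/-- `H` is obtained from `G` by deleting the vertex `x` (and all incident edges). -/
def IsVertexDeletion {V : Type} (G H : SubDigraph V) : Prop :=
  ∃ x : V, H.verts = G.verts \ {x} ∧
    ∀ u v, H.Adj u v ↔ G.Adj u v ∧ u ≠ x ∧ v ≠ x

/-- `H` is obtained from `G` by deleting the edge `(a, b)`. -/
def IsEdgeDeletion {V : Type} (G H : SubDigraph V) : Prop :=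
  ∃ a b : V, G.Adj a b ∧ H.verts = G.verts ∧
    ∀ u v, H.Adj u v ↔ G.Adj u v ∧ ¬(u = a ∧ v = b)

/-- `H` is obtained from `G` by butterfly-contracting a butterfly-contractible edge
`(u, v)`, i.e. an edge that is the unique edge with tail `u` or the unique edge with
head `v`; the two endpoints are identified (into `v`) and all resulting loops and
parallel edges are removed. -/
def IsButterflyContraction {V : Type} (G H : SubDigraph V) : Prop :=
  ∃ u v : V, G.Adj u v ∧
    ((∀ w, G.Adj u w → w = v) ∨ (∀ w, G.Adj w v → w = u)) ∧
    H.verts = G.verts \ {u} ∧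
    ∀ a b, H.Adj a b ↔
      a ≠ u ∧ b ≠ u ∧ a ≠ b ∧
        (G.Adj a b ∨ (b = v ∧ G.Adj a u) ∨ (a = v ∧ G.Adj u b))

/-- One step in the formation of a butterfly minor: a vertex deletion, an edge
deletion, or a butterfly contraction. -/
def BflyStep {V : Type} (G H : SubDigraph V) : Prop :=
  IsVertexDeletion G H ∨ IsEdgeDeletion G H ∨ IsButterflyContraction G H

/-- The digraph with adjacency `Hadj` (on the vertex type `U`) is a butterfly minor of
`G`: some digraph isomorphic to it can be obtained from `G` by a sequence of vertex
deletions, edge deletions, and butterfly contractions. -/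
def HasButterflyMinor {V U : Type} (G : SubDigraph V) (Hadj : U → U → Prop) : Prop :=
  ∃ G' : SubDigraph V, Relation.ReflTransGen BflyStep G G' ∧
    ∃ φ : U → V, Function.Injective φ ∧ Set.range φ = G'.verts ∧
      ∀ a b : U, Hadj a b ↔ G'.Adj (φ a) (φ b)

/-- The bidirection of the cycle of length `n` on `Fin n` (a bicycle): between any two
cyclically consecutive vertices there are edges in both directions. -/
def bicycleAdj (n : ℕ) (a b : Fin n) : Prop :=
  b.val = (a.val + 1) % n ∨ a.val = (b.val + 1) % n

/-! ### Auxiliary development: odd weightings ("non-even" digraphs).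

A digraph is *odd-weighted* (classically: non-even) if there is an edge weighting with
values in `ZMod 2` such that every dicycle has total weight `1`.  If a digraph has no
even dicycle then the all-ones weighting works.  Being odd-weighted is preserved by
vertex deletions, edge deletions and butterfly contractions, but an odd bicycle is
never odd-weighted; this proves the theorem. -/

/-- The total weight of a dicycle. -/
def wsum {V : Type} {R : V → V → Prop} (w : V → V → ZMod 2) (c : Dicycle R) : ZMod 2 :=
  ∑ i ∈ Finset.range c.len, w (c.vtx i) (c.vtx ((i + 1) % c.len))

/-- A relation is odd-weighted if some weighting gives every dicycle odd weight. -/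
def OddWeighted {V : Type} (R : V → V → Prop) : Prop :=
  ∃ w : V → V → ZMod 2, ∀ c : Dicycle R, wsum w c = 1

lemma mod_succ_of_lt {i l : ℕ} (h : i < l) : (i + 1) % l = if i + 1 = l then 0 else i + 1 := by
  split
  · simp [*, Nat.mod_self]
  · exact Nat.mod_eq_of_lt (by omega)

/-- Rotation of a dicycle by one step. -/
def Dicycle.rot1 {V : Type} {R : V → V → Prop} (c : Dicycle R) : Dicycle R where
  len := c.len
  two_le_len := c.two_le_len
  vtx := fun i => c.vtx ((i + 1) % c.len)
  inj := by
    intro i hi j hj h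
    have hl : 0 < c.len := by have := c.two_le_len; omega
    have h2 := c.inj _ (Nat.mod_lt _ hl) _ (Nat.mod_lt _ hl) h
    rw [mod_succ_of_lt hi, mod_succ_of_lt hj] at h2
    split_ifs at h2 <;> omega
  adj := by
    intro i hi
    have hl : 0 < c.len := by have := c.two_le_len; omega
    show R (c.vtx ((i + 1) % c.len)) (c.vtx (((i + 1) % c.len + 1) % c.len))
    exact c.adj ((i + 1) % c.len) (Nat.mod_lt _ hl)

lemma wsum_rot1 {V : Type} {R : V → V → Prop} (w : V → V → ZMod 2) (c : Dicycle R) :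
    wsum w c.rot1 = wsum w c := by
  have hl : 0 < c.len := by have := c.two_le_len; omega
  unfold wsum Dicycle.rot1
  simp only
  rw [Finset.sum_nbij' (i := fun k => (k + 1) % c.len)
    (j := fun k => (k + (c.len - 1)) % c.len)]
  · intro a ha; exact Finset.mem_range.mpr (Nat.mod_lt _ hl)
  · intro a ha; exact Finset.mem_range.mpr (Nat.mod_lt _ hl)
  · intro a ha
    simp only [Finset.mem_range] at ha
    rw [Nat.mod_add_mod, show a + 1 + (c.len - 1) = a + c.len by omega,
      Nat.add_mod_right, Nat.mod_eq_of_lt ha]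
  · intro a ha
    simp only [Finset.mem_range] at ha
    rw [Nat.mod_add_mod, show a + (c.len - 1) + 1 = a + c.len by omega,
      Nat.add_mod_right, Nat.mod_eq_of_lt ha]
  · intro a ha
    simp only [Finset.mem_range] at ha
    rw [Nat.mod_add_mod]

lemma exists_rot {V : Type} {R : V → V → Prop} (w : V → V → ZMod 2) (c : Dicycle R)
    (p : ℕ) (hp : p < c.len) :
    ∃ d : Dicycle R, d.len = c.len ∧ d.vtx 0 = c.vtx p ∧ wsum w d = wsum w c := by
  induction p generalizing c with
  | zero => exact ⟨c, rfl, rfl, rfl⟩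
  | succ p ih =>
      obtain ⟨d, h1, h2, h3⟩ := ih c.rot1 (by exact (by omega : p < c.len))
      refine ⟨d, h1, ?_, h3.trans (wsum_rot1 w c)⟩
      rw [h2]; show c.vtx ((p + 1) % c.len) = c.vtx (p + 1)
      rw [Nat.mod_eq_of_lt hp]

/-- Core lifting lemma for butterfly contractions: a dicycle of the contracted digraph
that passes through `v` (placed at position `0`) lifts to a dicycle of `G` whose
`w`-weight equals its `w'`-weight. -/
lemma lift_core {V : Type} (G H : SubDigraph V) (u v : V)
    (huv : G.Adj u v)
    (hbf : (∀ z, G.Adj u z → z = v) ∨ (∀ z, G.Adj z v → z = u))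
    (hiff : ∀ a b, H.Adj a b ↔ a ≠ u ∧ b ≠ u ∧ a ≠ b ∧
      (G.Adj a b ∨ (b = v ∧ G.Adj a u) ∨ (a = v ∧ G.Adj u b)))
    (w w' : V → V → ZMod 2)
    (hdir : ∀ a b, G.Adj a b → w' a b = w a b)
    (hin : ∀ a, ¬ G.Adj a v → w' a v = w a u + w u v)
    (hout : ∀ b, ¬ G.Adj v b → b ≠ v → w' v b = w u b + w u v)
    (c : Dicycle H.Adj) (hc0 : c.vtx 0 = v) :
    ∃ d : Dicycle G.Adj, wsum w d = wsum w' c := by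
  obtain ⟨m, hm⟩ : ∃ m, c.len = m + 2 := ⟨c.len - 2, by have := c.two_le_len; omega⟩
  set g := c.vtx with hgdef
  have hgu : ∀ i, i < c.len → g i ≠ u := fun i hi => ((hiff _ _).mp (c.adj i hi)).1
  have hgv : ∀ i, i < m + 2 → i ≠ 0 → g i ≠ v := by
    intro i hi h0 hv
    exact h0 (c.inj i (by omega) 0 (by omega) (hv.trans hc0.symm))
  have hadj : ∀ i, i < m + 2 → H.Adj (g i) (g ((i + 1) % (m + 2))) := by
    intro i hi; have := c.adj i (by omega); rwa [hm] at this
  have hmid : ∀ i, 1 ≤ i → i ≤ m → G.Adj (g i) (g (i + 1)) := by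
    intro i h1 h2
    have h := hadj i (by omega)
    rw [Nat.mod_eq_of_lt (by omega)] at h
    rcases ((hiff _ _).mp h).2.2.2 with h' | ⟨hb, _⟩ | ⟨ha, _⟩
    · exact h'
    · exact absurd hb (hgv (i + 1) (by omega) (by omega))
    · exact absurd ha (hgv i (by omega) (by omega))
  have hout0 : H.Adj (g 0) (g 1) := by
    have := hadj 0 (by omega)
    rwa [show (0 + 1) % (m + 2) = 1 from Nat.mod_eq_of_lt (by omega)] at this
  have hinm : H.Adj (g (m + 1)) (g 0) := by
    have := hadj (m + 1) (by omega)
    rwa [show (m + 1 + 1) % (m + 2) = 0 from by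
      rw [show m + 1 + 1 = m + 2 from by omega, Nat.mod_self]] at this
  have hg1v : g 1 ≠ v := hgv 1 (by omega) (by omega)
  have hgm1v : g (m + 1) ≠ v := hgv (m + 1) (by omega) (by omega)
  by_cases hdin : G.Adj (g (m + 1)) v <;> by_cases hdout : G.Adj v (g 1)
  · -- both wrap edges direct: reuse the cycle
    have adjG : ∀ i, i < c.len → G.Adj (g i) (g ((i + 1) % c.len)) := by
      intro i hi
      rw [hm] at hi ⊢
      rcases (by omega : i = 0 ∨ (1 ≤ i ∧ i ≤ m) ∨ i = m + 1) with h0 | ⟨h1, h2⟩ | h0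
      · subst h0
        rw [show (0 + 1) % (m + 2) = 1 from Nat.mod_eq_of_lt (by omega), hc0]
        exact hdout
      · rw [Nat.mod_eq_of_lt (by omega)]; exact hmid i h1 h2
      · subst h0
        rw [show (m + 1 + 1) % (m + 2) = 0 from by
          rw [show m + 1 + 1 = m + 2 from by omega, Nat.mod_self], hc0]
        exact hdin
    refine ⟨⟨c.len, c.two_le_len, g, c.inj, adjG⟩, ?_⟩
    unfold wsum
    exact Finset.sum_congr rfl fun i hi => (hdir _ _ (adjG i (Finset.mem_range.mp hi))).symm
  · -- in-edge direct, out-edge not: impossible by the butterfly condition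
    exfalso
    have hGub : G.Adj u (g 1) := by
      rcases ((hiff _ _).mp hout0).2.2.2 with h' | ⟨hb, _⟩ | ⟨_, h3⟩
      · rw [hc0] at h'; exact absurd h' hdout
      · exact absurd hb hg1v
      · exact h3
    rcases hbf with hA | hB
    · exact hg1v (hA _ hGub)
    · exact hgu (m + 1) (by omega) (hB _ hdin)
  · -- in-edge via u, out-edge direct: insert u at the end of the cycle
    have hGau : G.Adj (g (m + 1)) u := by
      rcases ((hiff _ _).mp hinm).2.2.2 with h' | ⟨_, h2⟩ | ⟨ha, _⟩
      · rw [hc0] at h'; exact absurd h' hdin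
      · exact h2
      · exact absurd ha hgm1v
    refine ⟨⟨m + 3, by omega, fun i => if i = m + 2 then u else g i, ?_, ?_⟩, ?_⟩
    · intro i hi j hj h
      split_ifs at h with h1 h2 h2
      · omega
      · exact absurd h.symm (hgu j (by omega))
      · exact absurd h (hgu i (by omega))
      · exact c.inj i (by omega) j (by omega) h
    · intro i hi
      rcases (by omega : i = 0 ∨ (1 ≤ i ∧ i ≤ m) ∨ i = m + 1 ∨ i = m + 2)
        with h0 | ⟨h1, h2⟩ | h0 | h0
      · subst h0
        rw [show (0 + 1) % (m + 3) = 1 from Nat.mod_eq_of_lt (by omega),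
          if_neg (by omega), if_neg (by omega), hc0]
        exact hdout
      · rw [Nat.mod_eq_of_lt (by omega), if_neg (by omega), if_neg (by omega)]
        exact hmid i h1 h2
      · subst h0
        rw [show (m + 1 + 1) % (m + 3) = m + 2 from Nat.mod_eq_of_lt (by omega),
          if_neg (by omega), if_pos rfl]
        exact hGau
      · subst h0
        rw [show (m + 2 + 1) % (m + 3) = 0 from by
          rw [show m + 2 + 1 = m + 3 from by omega, Nat.mod_self],
          if_pos rfl, if_neg (by omega), hc0]
        exact huv
    · show (∑ i ∈ Finset.range (m + 3),
          w (if i = m + 2 then u else g i)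
            (if (i + 1) % (m + 3) = m + 2 then u else g ((i + 1) % (m + 3))))
        = wsum w' c
      set T : ℕ → ZMod 2 := fun i => w (if i = m + 2 then u else g i)
        (if (i + 1) % (m + 3) = m + 2 then u else g ((i + 1) % (m + 3))) with hT
      have t1 : T (m + 1) = w (g (m + 1)) u := by
        show w (if m + 1 = m + 2 then u else g (m + 1))
          (if (m + 1 + 1) % (m + 3) = m + 2 then u else g ((m + 1 + 1) % (m + 3))) = _
        rw [show (m + 1 + 1) % (m + 3) = m + 2 from Nat.mod_eq_of_lt (by omega),
          if_neg (by omega), if_pos rfl]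
      have t2 : T (m + 2) = w u v := by
        show w (if m + 2 = m + 2 then u else g (m + 2))
          (if (m + 2 + 1) % (m + 3) = m + 2 then u else g ((m + 2 + 1) % (m + 3))) = _
        rw [show (m + 2 + 1) % (m + 3) = 0 from by
          rw [show m + 2 + 1 = m + 3 from by omega, Nat.mod_self],
          if_pos rfl, if_neg (by omega), hc0]
      have tmid : ∀ i ∈ Finset.range (m + 1), T i = w (g i) (g (i + 1)) := by
        intro i hi
        simp only [Finset.mem_range] at hi
        show w (if i = m + 2 then u else g i)
          (if (i + 1) % (m + 3) = m + 2 then u else g ((i + 1) % (m + 3))) = _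
        rw [Nat.mod_eq_of_lt (by omega : i + 1 < m + 3), if_neg (by omega), if_neg (by omega)]
      have smid : ∀ i ∈ Finset.range (m + 1),
          w' (g i) (g ((i + 1) % (m + 2))) = w (g i) (g (i + 1)) := by
        intro i hi
        simp only [Finset.mem_range] at hi
        rw [Nat.mod_eq_of_lt (by omega : i + 1 < m + 2)]
        refine hdir _ _ ?_
        rcases (by omega : i = 0 ∨ 1 ≤ i) with h0 | h1
        · subst h0; rw [hc0]; exact hdout
        · exact hmid i h1 (by omega)
      have eL : (∑ i ∈ Finset.range (m + 3), T i)
          = (∑ i ∈ Finset.range (m + 1), w (g i) (g (i + 1))) + (w (g (m + 1)) u + w u v) := by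
        calc (∑ i ∈ Finset.range (m + 3), T i)
            = (∑ i ∈ Finset.range (m + 2), T i) + T (m + 2) := Finset.sum_range_succ T (m + 2)
          _ = ((∑ i ∈ Finset.range (m + 1), T i) + T (m + 1)) + T (m + 2) := by
              rw [show m + 2 = m + 1 + 1 from by omega, Finset.sum_range_succ]
          _ = (∑ i ∈ Finset.range (m + 1), w (g i) (g (i + 1))) + (w (g (m + 1)) u + w u v) := by
              rw [Finset.sum_congr rfl tmid, t1, t2, add_assoc]
      have eR : wsum w' c
          = (∑ i ∈ Finset.range (m + 1), w (g i) (g (i + 1))) + (w (g (m + 1)) u + w u v) := by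
        unfold wsum
        rw [← hgdef, hm]
        calc (∑ i ∈ Finset.range (m + 2), w' (g i) (g ((i + 1) % (m + 2))))
            = (∑ i ∈ Finset.range (m + 1), w' (g i) (g ((i + 1) % (m + 2))))
              + w' (g (m + 1)) (g ((m + 1 + 1) % (m + 2))) := Finset.sum_range_succ _ (m + 1)
          _ = (∑ i ∈ Finset.range (m + 1), w (g i) (g (i + 1))) + (w (g (m + 1)) u + w u v) := by
              rw [Finset.sum_congr rfl smid,
                show (m + 1 + 1) % (m + 2) = 0 from by
                  rw [show m + 1 + 1 = m + 2 from by omega, Nat.mod_self],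
                hc0, hin _ hdin]
      rw [eL, eR]
  · -- both wrap edges via u: replace v by u
    have hGau : G.Adj (g (m + 1)) u := by
      rcases ((hiff _ _).mp hinm).2.2.2 with h' | ⟨_, h2⟩ | ⟨ha, _⟩
      · rw [hc0] at h'; exact absurd h' hdin
      · exact h2
      · exact absurd ha hgm1v
    have hGub : G.Adj u (g 1) := by
      rcases ((hiff _ _).mp hout0).2.2.2 with h' | ⟨hb, _⟩ | ⟨_, h3⟩
      · rw [hc0] at h'; exact absurd h' hdout
      · exact absurd hb hg1v
      · exact h3
    refine ⟨⟨m + 2, by omega, fun i => if i = 0 then u else g i, ?_, ?_⟩, ?_⟩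
    · intro i hi j hj h
      split_ifs at h with h1 h2 h2
      · omega
      · exact absurd h.symm (hgu j (by omega))
      · exact absurd h (hgu i (by omega))
      · exact c.inj i (by omega) j (by omega) h
    · intro i hi
      rcases (by omega : i = 0 ∨ (1 ≤ i ∧ i ≤ m) ∨ i = m + 1) with h0 | ⟨h1, h2⟩ | h0
      · subst h0
        rw [show (0 + 1) % (m + 2) = 1 from Nat.mod_eq_of_lt (by omega),
          if_pos rfl, if_neg (by omega)]
        exact hGub
      · rw [Nat.mod_eq_of_lt (by omega), if_neg (by omega), if_neg (by omega)]
        exact hmid i h1 h2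
      · subst h0
        rw [show (m + 1 + 1) % (m + 2) = 0 from by
          rw [show m + 1 + 1 = m + 2 from by omega, Nat.mod_self],
          if_neg (by omega), if_pos rfl]
        exact hGau
    · show (∑ i ∈ Finset.range (m + 2),
          w (if i = 0 then u else g i)
            (if (i + 1) % (m + 2) = 0 then u else g ((i + 1) % (m + 2))))
        = wsum w' c
      set T : ℕ → ZMod 2 := fun i => w (if i = 0 then u else g i)
        (if (i + 1) % (m + 2) = 0 then u else g ((i + 1) % (m + 2))) with hT
      have t0 : T 0 = w u (g 1) := by
        show w (if (0 : ℕ) = 0 then u else g 0)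
          (if (0 + 1) % (m + 2) = 0 then u else g ((0 + 1) % (m + 2))) = _
        rw [show (0 + 1) % (m + 2) = 1 from Nat.mod_eq_of_lt (by omega),
          if_pos rfl, if_neg (by omega)]
      have t1 : T (m + 1) = w (g (m + 1)) u := by
        show w (if m + 1 = 0 then u else g (m + 1))
          (if (m + 1 + 1) % (m + 2) = 0 then u else g ((m + 1 + 1) % (m + 2))) = _
        rw [show (m + 1 + 1) % (m + 2) = 0 from by
          rw [show m + 1 + 1 = m + 2 from by omega, Nat.mod_self],
          if_neg (by omega), if_pos rfl]
      have tmid : ∀ i ∈ Finset.range m, T (i + 1) = w (g (i + 1)) (g (i + 1 + 1)) := by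
        intro i hi
        simp only [Finset.mem_range] at hi
        show w (if i + 1 = 0 then u else g (i + 1))
          (if (i + 1 + 1) % (m + 2) = 0 then u else g ((i + 1 + 1) % (m + 2))) = _
        rw [Nat.mod_eq_of_lt (by omega : i + 1 + 1 < m + 2), if_neg (by omega),
          if_neg (by omega)]
      have smid : ∀ i ∈ Finset.range m,
          w' (g (i + 1)) (g ((i + 1 + 1) % (m + 2))) = w (g (i + 1)) (g (i + 1 + 1)) := by
        intro i hi
        simp only [Finset.mem_range] at hi
        rw [Nat.mod_eq_of_lt (by omega : i + 1 + 1 < m + 2)]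
        exact hdir _ _ (hmid (i + 1) (by omega) (by omega))
      have eL : (∑ i ∈ Finset.range (m + 2), T i)
          = ((∑ i ∈ Finset.range m, w (g (i + 1)) (g (i + 1 + 1)))
            + w (g (m + 1)) u) + w u (g 1) := by
        calc (∑ i ∈ Finset.range (m + 2), T i)
            = (∑ i ∈ Finset.range (m + 1), T (i + 1)) + T 0 := Finset.sum_range_succ' T (m + 1)
          _ = ((∑ i ∈ Finset.range m, T (i + 1)) + T (m + 1)) + T 0 := by
              rw [show m + 1 = m + 1 from rfl, Finset.sum_range_succ (fun i => T (i + 1)) m]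
          _ = ((∑ i ∈ Finset.range m, w (g (i + 1)) (g (i + 1 + 1)))
              + w (g (m + 1)) u) + w u (g 1) := by
              rw [Finset.sum_congr rfl tmid, t0, t1]
      have eR : wsum w' c
          = (((∑ i ∈ Finset.range m, w (g (i + 1)) (g (i + 1 + 1)))
            + (w (g (m + 1)) u + w u v)) + (w u (g 1) + w u v)) := by
        unfold wsum
        rw [← hgdef, hm]
        calc (∑ i ∈ Finset.range (m + 2), w' (g i) (g ((i + 1) % (m + 2))))
            = (∑ i ∈ Finset.range (m + 1), w' (g (i + 1)) (g ((i + 1 + 1) % (m + 2))))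
              + w' (g 0) (g ((0 + 1) % (m + 2))) := Finset.sum_range_succ' _ (m + 1)
          _ = ((∑ i ∈ Finset.range m, w' (g (i + 1)) (g ((i + 1 + 1) % (m + 2))))
              + w' (g (m + 1)) (g ((m + 1 + 1) % (m + 2))))
              + w' (g 0) (g ((0 + 1) % (m + 2))) := by
              rw [Finset.sum_range_succ (fun i => w' (g (i + 1)) (g ((i + 1 + 1) % (m + 2)))) m]
          _ = (((∑ i ∈ Finset.range m, w (g (i + 1)) (g (i + 1 + 1)))
              + (w (g (m + 1)) u + w u v)) + (w u (g 1) + w u v)) := by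
              rw [Finset.sum_congr rfl smid,
                show (m + 1 + 1) % (m + 2) = 0 from by
                  rw [show m + 1 + 1 = m + 2 from by omega, Nat.mod_self],
                show (0 + 1) % (m + 2) = 1 from Nat.mod_eq_of_lt (by omega),
                hc0, hin _ hdin, hout _ hdout hg1v]
      rw [eL, eR]
      have key : ∀ M A B x : ZMod 2, (M + A) + B = ((M + (A + x)) + (B + x)) := by decide
      exact key _ _ _ _

/-- Odd-weightedness is preserved by passing to a sub-relation. -/
lemma oddWeighted_of_sub {V : Type} {R S : V → V → Prop}
    (hsub : ∀ a b, S a b → R a b) (h : OddWeighted R) : OddWeighted S := by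
  obtain ⟨w, hw⟩ := h
  refine ⟨w, fun c => ?_⟩
  exact hw ⟨c.len, c.two_le_len, c.vtx, c.inj, fun i hi => hsub _ _ (c.adj i hi)⟩

/-- Odd-weightedness is preserved by butterfly contraction. -/
lemma oddWeighted_contraction {V : Type} (G H : SubDigraph V)
    (h : IsButterflyContraction G H) (hG : OddWeighted G.Adj) : OddWeighted H.Adj := by
  classical
  obtain ⟨u, v, huv, hbf, hverts, hiff⟩ := h
  obtain ⟨w, hw⟩ := hG
  refine ⟨fun a b => if G.Adj a b then w a b else if b = v then w a u + w u v
    else if a = v then w u b + w u v else 0, ?_⟩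
  set w' : V → V → ZMod 2 := fun a b => if G.Adj a b then w a b else if b = v then w a u + w u v
    else if a = v then w u b + w u v else 0 with hw'
  have hdir : ∀ a b, G.Adj a b → w' a b = w a b := by
    intro a b hab; simp only [hw']; simp [hab]
  have hin : ∀ a, ¬ G.Adj a v → w' a v = w a u + w u v := by
    intro a ha; simp only [hw']; simp [ha]
  have hout : ∀ b, ¬ G.Adj v b → b ≠ v → w' v b = w u b + w u v := by
    intro b hb hbv; simp only [hw']; simp [hb, hbv]
  intro c
  by_cases hv : ∃ p, p < c.len ∧ c.vtx p = v
  · obtain ⟨p, hp, hpv⟩ := hv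
    obtain ⟨d, hd1, hd2, hd3⟩ := exists_rot w' c p hp
    rw [← hd3]
    obtain ⟨e, he⟩ := lift_core G H u v huv hbf hiff w w' hdir hin hout d (hd2.trans hpv)
    rw [← he]
    exact hw e
  · push_neg at hv
    have adjG : ∀ i, i < c.len → G.Adj (c.vtx i) (c.vtx ((i + 1) % c.len)) := by
      intro i hi
      have hl : 0 < c.len := by have := c.two_le_len; omega
      rcases ((hiff _ _).mp (c.adj i hi)).2.2.2 with h' | ⟨hb, _⟩ | ⟨ha, _⟩
      · exact h'
      · exact absurd hb (hv _ (Nat.mod_lt _ hl))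
      · exact absurd ha (hv _ hi)
    have h2 : (∑ i ∈ Finset.range c.len, w (c.vtx i) (c.vtx ((i + 1) % c.len))) = 1 :=
      hw ⟨c.len, c.two_le_len, c.vtx, c.inj, adjG⟩
    show (∑ i ∈ Finset.range c.len, w' (c.vtx i) (c.vtx ((i + 1) % c.len))) = 1
    rw [← h2]
    exact Finset.sum_congr rfl fun i hi => hdir _ _ (adjG i (Finset.mem_range.mp hi))

lemma oddWeighted_step {V : Type} (G H : SubDigraph V) (h : BflyStep G H)
    (hG : OddWeighted G.Adj) : OddWeighted H.Adj := by
  rcases h with ⟨x, _, hiff⟩ | ⟨a, b, _, _, hiff⟩ | h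
  · exact oddWeighted_of_sub (fun a b hab => ((hiff a b).mp hab).1) hG
  · exact oddWeighted_of_sub (fun a' b' hab => ((hiff a' b').mp hab).1) hG
  · exact oddWeighted_contraction G H h hG

lemma oddWeighted_chain {V : Type} (G G' : SubDigraph V)
    (h : Relation.ReflTransGen BflyStep G G') (hG : OddWeighted G.Adj) :
    OddWeighted G'.Adj := by
  induction h with
  | refl => exact hG
  | tail _ hstep ih => exact oddWeighted_step _ _ hstep ih

/-- **Every digraph containing an odd bicycle as a butterfly minor contains an even
dicycle.** -/
theorem evenDicycle_of_oddBicycle_butterflyMinor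
    (V : Type) [Fintype V] (D : V → V → Prop) (hD : Irreflexive D)
    (n : ℕ) (hodd : Odd n) (h3 : 3 ≤ n)
    (hminor : HasButterflyMinor (SubDigraph.ofAdj D hD) (bicycleAdj n)) :
    ∃ c : Dicycle D, c.IsEven := by
  by_contra hcon
  push_neg at hcon
  have hoddlen : ∀ c : Dicycle D, Odd c.len := by
    intro c
    rcases Nat.even_or_odd c.len with he | ho
    · exact absurd he (by simpa [Dicycle.IsEven] using hcon c)
    · exact ho
  have hbase : OddWeighted (SubDigraph.ofAdj D hD).Adj := by
    refine ⟨fun _ _ => 1, fun c => ?_⟩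
    unfold wsum
    rw [Finset.sum_const, Finset.card_range, nsmul_eq_mul, mul_one]
    obtain ⟨k, hk⟩ := hoddlen c
    rw [hk]
    push_cast
    rw [show (2 : ZMod 2) = 0 from rfl]
    ring
  obtain ⟨G', hsteps, φ, hφinj, hφrange, hiso⟩ := hminor
  have hG' : OddWeighted G'.Adj := oddWeighted_chain _ _ hsteps hbase
  obtain ⟨w, hw⟩ := hG'
  have hn0 : 0 < n := by omega
  set x : ℕ → V := fun k => φ ⟨k % n, Nat.mod_lt k hn0⟩ with hx
  have hxper : ∀ k, x (k % n) = x k := by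
    intro k
    show φ ⟨k % n % n, _⟩ = φ ⟨k % n, _⟩
    congr 1
    exact Fin.ext (Nat.mod_eq_of_lt (Nat.mod_lt k hn0))
  have hxinj : ∀ i, i < n → ∀ j, j < n → x i = x j → i = j := by
    intro i hi j hj h
    have := hφinj h
    have h2 : i % n = j % n := congrArg Fin.val this
    rwa [Nat.mod_eq_of_lt hi, Nat.mod_eq_of_lt hj] at h2
  have hfwd : ∀ k, G'.Adj (x k) (x (k + 1)) := by
    intro k
    refine (hiso _ _).mp ?_
    left
    show (k + 1) % n = (k % n + 1) % n
    rw [Nat.mod_add_mod]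
  have hbwd : ∀ k, G'.Adj (x (k + 1)) (x k) := by
    intro k
    refine (hiso _ _).mp ?_
    right
    show (k + 1) % n = (k % n + 1) % n
    rw [Nat.mod_add_mod]
  have hxn0 : x n = x 0 := by
    rw [← hxper n, Nat.mod_self]
  -- forward Hamiltonian dicycle
  have hadjf : ∀ i, i < n → G'.Adj (x i) (x ((i + 1) % n)) := by
    intro i hi
    rw [hxper (i + 1)]
    exact hfwd i
  have hfwdsum0 : (∑ i ∈ Finset.range n, w (x i) (x ((i + 1) % n))) = 1 :=
    hw ⟨n, by omega, x, hxinj, hadjf⟩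
  have hfwdsum : (∑ i ∈ Finset.range n, w (x i) (x (i + 1))) = 1 := by
    rw [← hfwdsum0]
    exact Finset.sum_congr rfl fun i hi => by rw [hxper (i + 1)]
  -- backward Hamiltonian dicycle
  set y : ℕ → V := fun j => x (n - j) with hy
  have hyinj : ∀ i, i < n → ∀ j, j < n → y i = y j → i = j := by
    intro i hi j hj h
    have h2 : x ((n - i) % n) = x ((n - j) % n) := by
      rw [hxper (n - i), hxper (n - j)]; exact h
    have h3 := hxinj _ (Nat.mod_lt _ hn0) _ (Nat.mod_lt _ hn0) h2
    rcases (by omega : i = 0 ∨ 1 ≤ i) with h0 | h0 <;>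
      rcases (by omega : j = 0 ∨ 1 ≤ j) with h1 | h1
    · omega
    · subst h0
      rw [Nat.sub_zero, Nat.mod_self, Nat.mod_eq_of_lt (by omega : n - j < n)] at h3
      omega
    · subst h1
      rw [Nat.sub_zero, Nat.mod_self, Nat.mod_eq_of_lt (by omega : n - i < n)] at h3
      omega
    · rw [Nat.mod_eq_of_lt (by omega : n - i < n),
        Nat.mod_eq_of_lt (by omega : n - j < n)] at h3
      omega
  have hadjb : ∀ j, j < n → G'.Adj (y j) (y ((j + 1) % n)) := by
    intro j hj
    rcases (by omega : j = n - 1 ∨ j < n - 1) with h0 | h0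
    · subst h0
      rw [show (n - 1 + 1) % n = 0 from by rw [show n - 1 + 1 = n from by omega, Nat.mod_self]]
      show G'.Adj (x (n - (n - 1))) (x (n - 0))
      rw [show n - (n - 1) = 1 from by omega, Nat.sub_zero, hxn0]
      exact hbwd 0
    · rw [Nat.mod_eq_of_lt (by omega : j + 1 < n)]
      show G'.Adj (x (n - j)) (x (n - (j + 1)))
      have := hbwd (n - (j + 1))
      rwa [show n - (j + 1) + 1 = n - j from by omega] at this
  have hbwdsum0 : (∑ j ∈ Finset.range n, w (y j) (y ((j + 1) % n))) = 1 :=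
    hw ⟨n, by omega, y, hyinj, hadjb⟩
  have hbwdsum : (∑ i ∈ Finset.range n, w (x (i + 1)) (x i)) = 1 := by
    rw [← hbwdsum0]
    refine Finset.sum_nbij' (i := fun j => n - 1 - j) (j := fun j => n - 1 - j) ?_ ?_ ?_ ?_ ?_
    · intro a ha; simp only [Finset.mem_range] at ha ⊢; omega
    · intro a ha; simp only [Finset.mem_range] at ha ⊢; omega
    · intro a ha; simp only [Finset.mem_range] at ha
      show n - 1 - (n - 1 - a) = a; omega
    · intro a ha; simp only [Finset.mem_range] at ha
      show n - 1 - (n - 1 - a) = a; omega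
    · intro a ha
      simp only [Finset.mem_range] at ha
      rcases (by omega : a = 0 ∨ 1 ≤ a) with h0 | h0
      · subst h0
        rw [show (n - 1 - 0 + 1) % n = 0 from by
          rw [show n - 1 - 0 + 1 = n from by omega, Nat.mod_self]]
        show w (x (0 + 1)) (x 0) = w (x (n - (n - 1 - 0))) (x (n - 0))
        rw [show n - (n - 1 - 0) = 0 + 1 from by omega, Nat.sub_zero, hxn0]
      · rw [Nat.mod_eq_of_lt (by omega : n - 1 - a + 1 < n)]
        show w (x (a + 1)) (x a) = w (x (n - (n - 1 - a))) (x (n - (n - 1 - a + 1)))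
        rw [show n - (n - 1 - a) = a + 1 from by omega,
          show n - (n - 1 - a + 1) = a from by omega]
  -- digon dicycles
  have digon : ∀ i, i < n → w (x i) (x (i + 1)) + w (x (i + 1)) (x i) = 1 := by
    intro i hi
    have hne : x i ≠ x (i + 1) := by
      intro h
      rcases (by omega : i + 1 < n ∨ i + 1 = n) with h1 | h1
      · have := hxinj i (by omega) (i + 1) h1 h
        omega
      · rw [h1, hxn0] at h
        have := hxinj i hi 0 (by omega) h
        omega
    have dinj : ∀ a, a < 2 → ∀ b, b < 2 →
        (if a % 2 = 0 then x i else x (i + 1)) = (if b % 2 = 0 then x i else x (i + 1)) →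
        a = b := by
      intro a ha b hb h
      interval_cases a <;> interval_cases b
      · rfl
      · norm_num at h; exact absurd h hne
      · norm_num at h; exact absurd h.symm hne
      · rfl
    have dadj : ∀ j, j < 2 → G'.Adj (if j % 2 = 0 then x i else x (i + 1))
        (if (j + 1) % 2 % 2 = 0 then x i else x (i + 1)) := by
      intro j hj
      interval_cases j
      · norm_num; exact hfwd i
      · norm_num; exact hbwd i
    have hd : (∑ j ∈ Finset.range 2, w (if j % 2 = 0 then x i else x (i + 1))
        (if (j + 1) % 2 % 2 = 0 then x i else x (i + 1))) = 1 :=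
      hw ⟨2, le_refl 2, fun j => if j % 2 = 0 then x i else x (i + 1), dinj, dadj⟩
    rw [← hd]
    rw [Finset.sum_range_succ, Finset.sum_range_succ, Finset.sum_range_zero]
    norm_num
  -- the parity contradiction
  have hsum : (∑ i ∈ Finset.range n, (w (x i) (x (i + 1)) + w (x (i + 1)) (x i)))
      = (n : ZMod 2) := by
    rw [Finset.sum_congr rfl fun i hi => digon i (Finset.mem_range.mp hi)]
    rw [Finset.sum_const, Finset.card_range, nsmul_eq_mul, mul_one]
  have hfinal : (n : ZMod 2) = 0 := by
    rw [← hsum, Finset.sum_add_distrib, hfwdsum, hbwdsum]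
    rfl
  obtain ⟨k, hk⟩ := hodd
  rw [hk] at hfinal
  push_cast at hfinal
  rw [show (2 : ZMod 2) = 0 from rfl] at hfinal
  simp at hfinal
end

section
/- Let D be a digraph, let k ≥ 1 be an integer, and let W be a cylindrical wall of order l ≥ 3k contained in D, with pairwise vertex-disjoint concentric dicycles Q_1,…,Q_l. Then for every directed separation (A,B) of D of order less than k there is exactly one side X ∈ {A,B} such that X ∖ (A ∩ B) contains the entire vertex set of some cycle Q_i of W. Moreover, the orientation big_W of S_k(D) that maps every (A,B) ∈ S_k(D) to this side is a tangle of order k. -/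
/-- Adjacency of the elementary cylindrical `k`-wall, on vertex set
`Fin (2*k) × Fin (4*k)` (cycle index of the underlying cylindrical grid of order `2k`,
position on the cycle).  It is obtained from the cylindrical grid of order `2k` by
deleting every cycle edge whose tail position has the same parity as its cycle index. -/
def elemWallAdj (k : ℕ) (a b : Fin (2 * k) × Fin (4 * k)) : Prop :=
  (a.1 = b.1 ∧ b.2.val = (a.2.val + 1) % (4 * k) ∧ a.2.val % 2 ≠ a.1.val % 2) ∨
  (a.2 = b.2 ∧ a.2.val % 2 = 0 ∧ b.1.val = a.1.val + 1) ∨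
  (a.2 = b.2 ∧ a.2.val % 2 = 1 ∧ a.1.val = b.1.val + 1)

/-- An embedding of a subdivision of the pattern digraph `B` into the host digraph `D`:
branch vertices are given by the injection `toFun`, and every edge `(u,v)` of the
pattern is realized by a directed path in `D` (given by its list of vertices
`path u v`) from `toFun u` to `toFun v`; these paths are internally disjoint from each
other and from the branch vertices. -/
structure SubdivEmbedding {U V : Type} (B : U → U → Prop) (D : V → V → Prop) :
    Type where
  toFun : U → V
  inj : Function.Injective toFun
  path : U → U → List V
  path_head : ∀ u v, B u v → (path u v).head? = some (toFun u)
  path_last : ∀ u v, B u v → (path u v).getLast? = some (toFun v)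
  path_chain : ∀ u v, B u v → (path u v).Chain' D
  path_nodup : ∀ u v, B u v → (path u v).Nodup
  path_len : ∀ u v, B u v → 2 ≤ (path u v).length
  internal_avoid_branch : ∀ u v, B u v →
    ∀ x ∈ ((path u v).drop 1).dropLast, x ∉ Set.range toFun
  internal_disjoint : ∀ u v u' v', B u v → B u' v' → (u, v) ≠ (u', v') →
    ∀ x ∈ ((path u v).drop 1).dropLast, x ∉ ((path u' v').drop 1).dropLast

/-- The vertex set of the embedded subdivision. -/
def SubdivEmbedding.vertexSet {U V : Type} {B : U → U → Prop} {D : V → V → Prop}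
    (W : SubdivEmbedding B D) : Set V :=
  {x | ∃ u v, B u v ∧ x ∈ W.path u v}

/-- The edge set of the embedded subdivision: all pairs of consecutive vertices on the
paths realizing the pattern edges. -/
def SubdivEmbedding.edgeSet {U V : Type} {B : U → U → Prop} {D : V → V → Prop}
    (W : SubdivEmbedding B D) : Set (V × V) :=
  {q | ∃ u v, B u v ∧ [q.1, q.2] <:+: W.path u v}

/-- The vertex set of the `j`-th concentric dicycle `Q_j` of a cylindrical wall of
order `l` (given as an embedded subdivision of the elementary cylindrical `l`-wall):
all vertices lying on the paths realizing pattern edges both of whose endpoints belong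
to the `j`-th band, i.e. to the grid cycles `2j` and `2j+1`. -/
def wallCycleVerts {l : ℕ} {V : Type} {D : V → V → Prop}
    (W : SubdivEmbedding (elemWallAdj l) D) (j : ℕ) : Set V :=
  {x | ∃ u v, elemWallAdj l u v ∧ u.1.val / 2 = j ∧ v.1.val / 2 = j ∧ x ∈ W.path u v}

/-- A directed separation `(A, B)` of the digraph `D`: `A ∪ B` is the whole vertex set
and no edge has its tail in `B ∖ A` and its head in `A ∖ B`.  Its order is `|A ∩ B|`. -/
def IsDirSep {V : Type} (D : V → V → Prop) (A B : Set V) : Prop :=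
  A ∪ B = Set.univ ∧ ∀ u v, D u v → u ∈ B \ A → v ∈ A \ B → False

/-- A tangle of order `k` in `D`: an orientation of all directed separations of order
less than `k`, assigning to each a big side and a small side, such that no three small
sides cover the whole vertex set. -/
structure Tangle {V : Type} (D : V → V → Prop) (k : ℕ) : Type where
  big : Set V × Set V → Set V
  small : Set V × Set V → Set V
  sides : ∀ A B : Set V, IsDirSep D A B → (A ∩ B).ncard < k →
    (big (A, B) = A ∧ small (A, B) = B) ∨ (big (A, B) = B ∧ small (A, B) = A)
  not_three_cover : ∀ A₁ B₁ A₂ B₂ A₃ B₃ : Set V,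
    IsDirSep D A₁ B₁ → (A₁ ∩ B₁).ncard < k →
    IsDirSep D A₂ B₂ → (A₂ ∩ B₂).ncard < k →
    IsDirSep D A₃ B₃ → (A₃ ∩ B₃).ncard < k →
    small (A₁, B₁) ∪ small (A₂, B₂) ∪ small (A₃, B₃) ≠ Set.univ


/-!
The concentric cycles `Q_i` are pairwise disjoint, so a separator of order `< k ≤ l / 3` misses
one of them, and a strongly connected subgraph avoiding the separator lies on one side of it.
Cycles on opposite sides are impossible: each of the `2 l` disjoint columns of the right parity
is a dipath from the cycle on the small side to the one on the big side and so meets the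
separator.  Given three separations of order `< k`, their separators together still miss some
`Q_i`, which then lies in all three big sides, so the small sides cannot cover `V`.
-/

open Function Relation

theorem List.IsChain.reflTransGen_of_head?_eq {α : Type*} {R : α → α → Prop} {L : List α}
    {a x : α} (hL : L.IsChain R) (ha : L.head? = some a) (hx : x ∈ L) :
    ReflTransGen R a x :=
  hL.induction (ReflTransGen R a ·) L (fun _ _ hyz hy => hy.tail hyz)
    (fun hne => by rw [(List.head_eq_iff_head?_eq_some hne).2 ha]) x hx

theorem List.IsChain.reflTransGen_of_getLast?_eq {α : Type*} {R : α → α → Prop} {L : List α}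
    {b x : α} (hL : L.IsChain R) (hb : L.getLast? = some b) (hx : x ∈ L) :
    ReflTransGen R x b :=
  hL.backwards_induction (ReflTransGen R · b) L (fun _ _ hyz hz => hz.head hyz)
    (fun hne => by rw [(List.getLast_eq_iff_getLast?_eq_some hne).2 hb]) x hx

theorem List.eq_or_eq_or_mem_dropLast_drop_one {α : Type*} {L : List α} {a b x : α}
    (ha : L.head? = some a) (hb : L.getLast? = some b) (hx : x ∈ L) :
    x = a ∨ x = b ∨ x ∈ (L.drop 1).dropLast := by
  obtain ⟨L', rfl⟩ := List.head?_eq_some_iff.1 ha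
  rcases List.eq_nil_or_concat L' with rfl | ⟨M, c, rfl⟩
  · simp_all
  · rw [List.concat_eq_append, ← List.cons_append, List.getLast?_concat,
      Option.some_inj] at hb
    subst hb
    simp only [List.concat_eq_append, List.mem_cons, List.mem_append, List.not_mem_nil,
      or_false, List.drop_one, List.tail_cons, List.dropLast_concat] at hx ⊢
    tauto

theorem Set.ncard_le_ncard_of_pairwiseDisjoint {ι V : Type*} {I : Set ι} {F : ι → Set V}
    {S : Set V} (hS : S.Finite) (hF : I.PairwiseDisjoint F)
    (hmeet : ∀ i ∈ I, (F i ∩ S).Nonempty) : I.ncard ≤ S.ncard := by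
  obtain rfl | ⟨i₀, hi₀⟩ := I.eq_empty_or_nonempty
  · simp
  have : Nonempty V := ⟨(hmeet i₀ hi₀).some⟩
  choose! g hg using hmeet
  refine Set.ncard_le_ncard_of_injOn g (fun i hi => (hg i hi).2) ?_ hS
  intro i hi j hj hij
  by_contra hne
  exact Set.disjoint_left.1 (hF hi hj hne) (hg i hi).1 (hij ▸ (hg j hj).1)

section Separation

variable {V : Type}

abbrev ReachableWithin (D : V → V → Prop) (S : Set V) : V → V → Prop :=
  ReflTransGen fun a b => D a b ∧ a ∈ S ∧ b ∈ S

namespace IsDirSep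

variable {D : V → V → Prop} {A B S : Set V}

theorem notMem_of_reachableWithin (h : IsDirSep D A B) (hS : Disjoint S (A ∩ B)) {x y : V}
    (hxy : ReachableWithin D S x y) (hx : x ∉ A) : y ∉ A := by
  induction hxy with
  | refl => exact hx
  | tail _ hbc ih =>
    intro hc
    have hcB : _ ∉ B := fun hcB => Set.disjoint_left.1 hS hbc.2.2 ⟨hc, hcB⟩
    have hbB : _ ∈ B := (h.1 ▸ Set.mem_univ _ : _ ∈ A ∪ B).resolve_left ih
    exact h.2 _ _ hbc.1 ⟨hbB, ih⟩ ⟨hc, hcB⟩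

theorem inter_nonempty_of_reachableWithin (h : IsDirSep D A B) {x y : V}
    (hxy : ReachableWithin D S x y) (hx : x ∉ A) (hy : y ∈ A) : (S ∩ (A ∩ B)).Nonempty :=
  Set.not_disjoint_iff_nonempty_inter.1 fun hS => h.notMem_of_reachableWithin hS hxy hx hy

theorem subset_sdiff_or_subset_sdiff (h : IsDirSep D A B) (hS : Disjoint S (A ∩ B))
    (hconn : ∀ x ∈ S, ∀ y ∈ S, ReachableWithin D S x y) : S ⊆ A \ B ∨ S ⊆ B \ A := by
  by_cases hout : ∃ x ∈ S, x ∉ A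
  · obtain ⟨x, hxS, hxA⟩ := hout
    refine Or.inr fun y hy => ?_
    have hyA := h.notMem_of_reachableWithin hS (hconn x hxS y hy) hxA
    exact ⟨(h.1 ▸ Set.mem_univ y : y ∈ A ∪ B).resolve_left hyA, hyA⟩
  · push Not at hout
    exact Or.inl fun y hy =>
      ⟨hout y hy, fun hyB => Set.disjoint_left.1 hS hy ⟨hout y hy, hyB⟩⟩

end IsDirSep

end Separation

namespace SubdivEmbedding

variable {U V : Type} {B : U → U → Prop} {D : V → V → Prop} (W : SubdivEmbedding B D)
  {ι : Type*} (f : U → ι) {c : ι} {u v : U}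

def vertsOver (c : ι) : Set V :=
  {x | ∃ u v, B u v ∧ f u = c ∧ f v = c ∧ x ∈ W.path u v}

theorem toFun_mem_path_left (h : B u v) : W.toFun u ∈ W.path u v :=
  List.mem_of_mem_head? (W.path_head u v h)

theorem toFun_mem_path_right (h : B u v) : W.toFun v ∈ W.path u v :=
  List.mem_of_mem_getLast? (W.path_last u v h)

theorem toFun_mem_vertsOver (h : B u v) (hu : f u = c) (hv : f v = c) :
    W.toFun u ∈ W.vertsOver f c :=
  ⟨u, v, h, hu, hv, W.toFun_mem_path_left h⟩

theorem exists_eq_toFun_of_mem_path_of_mem_path {u' v' : U} {x : V} (h : B u v)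
    (h' : B u' v') (hne : (u, v) ≠ (u', v')) (hx : x ∈ W.path u v) (hx' : x ∈ W.path u' v') :
    ∃ w, x = W.toFun w ∧ (w = u ∨ w = v) ∧ (w = u' ∨ w = v') := by
  have mem_cases {a b : U} (hab : B a b) (hxab : x ∈ W.path a b) :=
    List.eq_or_eq_or_mem_dropLast_drop_one (W.path_head a b hab) (W.path_last a b hab) hxab
  have endpoint {a b : U} (hab : B a b) (hxab : x ∈ W.path a b) (w : U) (hw : x = W.toFun w) :
      w = a ∨ w = b := by
    rcases mem_cases hab hxab with e | e | hint
    · exact Or.inl (W.inj (hw.symm.trans e))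
    · exact Or.inr (W.inj (hw.symm.trans e))
    · exact absurd ⟨w, hw.symm⟩ (W.internal_avoid_branch a b hab x hint)
  obtain ⟨w, hw⟩ : x ∈ Set.range W.toFun := by
    rcases mem_cases h hx with e | e | hint
    · exact ⟨u, e.symm⟩
    · exact ⟨v, e.symm⟩
    rcases mem_cases h' hx' with e | e | hint'
    · exact ⟨u', e.symm⟩
    · exact ⟨v', e.symm⟩
    · exact absurd hint' (W.internal_disjoint u v u' v' h h' hne x hint)
  exact ⟨w, hw.symm, endpoint h hx w hw.symm, endpoint h' hx' w hw.symm⟩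

theorem pairwise_disjoint_vertsOver : Pairwise (Disjoint on W.vertsOver f) := by
  intro c c' hcc'
  rw [Function.onFun, Set.disjoint_left]
  rintro x ⟨u, v, huv, rfl, hv, hx⟩ ⟨u', v', huv', rfl, hv', hx'⟩
  have hne : (u, v) ≠ (u', v') := fun e => hcc' (congrArg (f ∘ Prod.fst) e)
  obtain ⟨w, -, hw, hw'⟩ := W.exists_eq_toFun_of_mem_path_of_mem_path huv huv' hne hx hx'
  have hfw : f w = f u := hw.elim (congrArg f) (· ▸ hv)
  have hfw' : f w = f u' := hw'.elim (congrArg f) (· ▸ hv')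
  exact hcc' (hfw.symm.trans hfw')

theorem reachableWithin_of_mem_path {x : V} (h : B u v) (hu : f u = c) (hv : f v = c)
    (hx : x ∈ W.path u v) :
    ReachableWithin D (W.vertsOver f c) (W.toFun u) x ∧
      ReachableWithin D (W.vertsOver f c) x (W.toFun v) := by
  have hchain : (W.path u v).IsChain fun a b =>
      D a b ∧ a ∈ W.vertsOver f c ∧ b ∈ W.vertsOver f c :=
    List.IsChain.imp_of_mem_imp
      (fun a b ha hb hab => ⟨hab, ⟨u, v, h, hu, hv, ha⟩, ⟨u, v, h, hu, hv, hb⟩⟩)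
      (W.path_chain u v h)
  exact ⟨hchain.reflTransGen_of_head?_eq (W.path_head u v h) hx,
    hchain.reflTransGen_of_getLast?_eq (W.path_last u v h) hx⟩

theorem reachableWithin_toFun {a b : U}
    (hab : ReflTransGen (fun u v => B u v ∧ f u = c ∧ f v = c) a b) :
    ReachableWithin D (W.vertsOver f c) (W.toFun a) (W.toFun b) := by
  induction hab with
  | refl => exact ReflTransGen.refl
  | tail _ hbc ih =>
    exact ih.trans (W.reachableWithin_of_mem_path f hbc.1 hbc.2.1 hbc.2.2
      (W.toFun_mem_path_right hbc.1)).1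

theorem reachableWithin_vertsOver
    (hconn : ∀ a b, f a = c → f b = c →
      ReflTransGen (fun u v => B u v ∧ f u = c ∧ f v = c) a b)
    {x y : V} (hx : x ∈ W.vertsOver f c) (hy : y ∈ W.vertsOver f c) :
    ReachableWithin D (W.vertsOver f c) x y := by
  obtain ⟨u, v, huv, hu, hv, hx⟩ := hx
  obtain ⟨u', v', huv', hu', hv', hy⟩ := hy
  exact ((W.reachableWithin_of_mem_path f huv hu hv hx).2.trans
    (W.reachableWithin_toFun f (hconn v u' hv hu'))).trans
    (W.reachableWithin_of_mem_path f huv' hu' hv' hy).1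

end SubdivEmbedding

section Wall

/-- The `t`-th vertex of the closed walk around band `j` (grid cycles `2j` and `2j+1`) of the
elementary cylindrical wall: it alternates vertical and cycle edges, visiting positions
`0, 0, 1, 1, 2, …` on rows `2j, 2j+1, 2j+1, 2j, 2j, …`, with period `8 l`. -/
def bandVertex (l j : ℕ) (hj : j < l) (t : ℕ) : Fin (2 * l) × Fin (4 * l) :=
  (⟨2 * j + (t + 1) / 2 % 2, by omega⟩, ⟨t / 2 % (4 * l), Nat.mod_lt _ (by omega)⟩)

variable {l : ℕ}

theorem bandVertex_fst_div_two {j : ℕ} (hj : j < l) (t : ℕ) :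
    (bandVertex l j hj t).1.val / 2 = j := by
  simp only [bandVertex]
  omega

theorem elemWallAdj_bandVertex_succ {j : ℕ} (hj : j < l) (t : ℕ) :
    elemWallAdj l (bandVertex l j hj t) (bandVertex l j hj (t + 1)) := by
  have hpar : t / 2 % (4 * l) % 2 = t / 2 % 2 := Nat.mod_mod_of_dvd _ ⟨2 * l, by ring⟩
  simp only [elemWallAdj, bandVertex, Fin.ext_iff, hpar]
  obtain h | h | h | h : t % 4 = 0 ∨ t % 4 = 1 ∨ t % 4 = 2 ∨ t % 4 = 3 := by omega
  · rw [show (t + 1) / 2 = t / 2 by omega]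
    omega
  · rw [show (t + 1) / 2 = t / 2 + 1 by omega, Nat.mod_add_mod]
    omega
  · rw [show (t + 1) / 2 = t / 2 by omega]
    omega
  · rw [show (t + 1) / 2 = t / 2 + 1 by omega, Nat.mod_add_mod]
    omega

theorem exists_bandVertex_eq {j : ℕ} (hj : j < l) (w : Fin (2 * l) × Fin (4 * l))
    (hw : w.1.val / 2 = j) (N : ℕ) : ∃ t ≥ N, bandVertex l j hj t = w := by
  have hN : N ≤ 4 * l * N := Nat.le_mul_of_pos_left N (by omega)
  refine ⟨2 * (w.2.val + 4 * l * N) + (w.1.val + w.2.val) % 2, by omega,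
    Prod.ext (Fin.ext ?_) (Fin.ext ?_)⟩
  · have heven : 4 * l * N = 2 * (2 * l * N) := by ring
    simp only [bandVertex]
    rcases Nat.mod_two_eq_zero_or_one w.1.val with hr | hr <;>
      rcases Nat.mod_two_eq_zero_or_one w.2.val with hp | hp <;> omega
  · simp only [bandVertex]
    rw [show (2 * (w.2.val + 4 * l * N) + (w.1.val + w.2.val) % 2) / 2 = w.2.val + 4 * l * N by
      omega, Nat.add_mul_mod_self_left, Nat.mod_eq_of_lt w.2.isLt]

theorem reflTransGen_bandVertex {j : ℕ} (hj : j < l) (s n : ℕ) :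
    ReflTransGen (fun u v => elemWallAdj l u v ∧ u.1.val / 2 = j ∧ v.1.val / 2 = j)
      (bandVertex l j hj s) (bandVertex l j hj (s + n)) := by
  induction n with
  | zero => exact ReflTransGen.refl
  | succ n ih =>
    exact ih.tail ⟨elemWallAdj_bandVertex_succ hj _, bandVertex_fst_div_two hj _,
      bandVertex_fst_div_two hj _⟩

theorem reflTransGen_band {j : ℕ} {a b : Fin (2 * l) × Fin (4 * l)} (ha : a.1.val / 2 = j)
    (hb : b.1.val / 2 = j) :
    ReflTransGen (fun u v => elemWallAdj l u v ∧ u.1.val / 2 = j ∧ v.1.val / 2 = j) a b := by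
  have hj : j < l := by omega
  obtain ⟨s, -, rfl⟩ := exists_bandVertex_eq hj a ha 0
  obtain ⟨t, hst, rfl⟩ := exists_bandVertex_eq hj b hb s
  obtain ⟨n, rfl⟩ := Nat.exists_eq_add_of_le hst
  exact reflTransGen_bandVertex hj s n

theorem reflTransGen_column_up (p : Fin (4 * l)) (hp : p.val % 2 = 0) {r r' : Fin (2 * l)}
    (hrr : r ≤ r') :
    ReflTransGen (fun u v => elemWallAdj l u v ∧ u.2.val = p.val ∧ v.2.val = p.val)
      (r, p) (r', p) := by
  suffices ∀ n (hrn : r.val ≤ n) (hn : n < 2 * l),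
      ReflTransGen (fun u v => elemWallAdj l u v ∧ u.2.val = p.val ∧ v.2.val = p.val)
        (r, p) (⟨n, hn⟩, p) from this r'.val hrr r'.isLt
  intro n hrn
  induction n, hrn using Nat.le_induction with
  | base => exact fun _ => ReflTransGen.refl
  | succ n _ ih =>
    exact fun hn => (ih (by omega)).tail ⟨Or.inr (Or.inl ⟨rfl, hp, rfl⟩), rfl, rfl⟩

theorem reflTransGen_column_down (p : Fin (4 * l)) (hp : p.val % 2 = 1) {r r' : Fin (2 * l)}
    (hrr : r ≤ r') :
    ReflTransGen (fun u v => elemWallAdj l u v ∧ u.2.val = p.val ∧ v.2.val = p.val)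
      (r', p) (r, p) := by
  suffices ∀ n (hrn : r.val ≤ n) (hn : n < 2 * l),
      ReflTransGen (fun u v => elemWallAdj l u v ∧ u.2.val = p.val ∧ v.2.val = p.val)
        (⟨n, hn⟩, p) (r, p) from this r'.val hrr r'.isLt
  intro n hrn
  induction n, hrn using Nat.le_induction with
  | base => exact fun _ => ReflTransGen.refl
  | succ n _ ih =>
    exact fun hn => ReflTransGen.head (b := (⟨n, by omega⟩, p))
      ⟨Or.inr (Or.inr ⟨rfl, hp, rfl⟩), rfl, rfl⟩ (ih _)

variable {V : Type} {D : V → V → Prop} (W : SubdivEmbedding (elemWallAdj l) D)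

theorem toFun_mem_wallCycleVerts {j : ℕ} (a : Fin (2 * l) × Fin (4 * l))
    (ha : a.1.val / 2 = j) :
    W.toFun a ∈ wallCycleVerts W j := by
  obtain ⟨t, -, ht⟩ := exists_bandVertex_eq (by omega) a ha 0
  rw [← ht]
  exact W.toFun_mem_vertsOver _ (elemWallAdj_bandVertex_succ _ t) (bandVertex_fst_div_two _ t)
    (bandVertex_fst_div_two _ (t + 1))

theorem wallCycleVerts_nonempty {i : ℕ} (hi : i < l) : (wallCycleVerts W i).Nonempty :=
  ⟨_, toFun_mem_wallCycleVerts W (⟨2 * i, by omega⟩, ⟨0, by omega⟩) (by simp)⟩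

theorem exists_wallCycleVerts_disjoint [Finite V] {S : Set V} (hS : S.ncard < l) :
    ∃ i < l, Disjoint (wallCycleVerts W i) S := by
  by_contra! hmeet
  have := Set.ncard_le_ncard_of_pairwiseDisjoint S.toFinite
    ((W.pairwise_disjoint_vertsOver fun u => u.1.val / 2).set_pairwise (Set.Iio l))
    fun i hi => Set.not_disjoint_iff_nonempty_inter.1 (hmeet i hi)
  rw [Set.ncard_Iio_nat] at this
  omega

namespace IsDirSep

variable {W} {A B : Set V}

theorem wallCycleVerts_subset_or (h : IsDirSep D A B) {j : ℕ}
    (hj : Disjoint (wallCycleVerts W j) (A ∩ B)) :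
    wallCycleVerts W j ⊆ A \ B ∨ wallCycleVerts W j ⊆ B \ A :=
  h.subset_sdiff_or_subset_sdiff hj fun _ hx _ hy =>
    W.reachableWithin_vertsOver _ (fun _ _ => reflTransGen_band) hx hy

theorem two_mul_le_ncard_inter [Finite V] (h : IsDirSep D A B) {i j : ℕ} (hi : i < l)
    (hj : j < l) (hQi : wallCycleVerts W i ⊆ A \ B) (hQj : wallCycleVerts W j ⊆ B \ A) :
    2 * l ≤ (A ∩ B).ncard := by
  set e := if i < j then 1 else 0 with he
  have hcolumn : ∀ t ∈ Set.Iio (2 * l),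
      (W.vertsOver (fun u => u.2.val) (2 * t + e) ∩ (A ∩ B)).Nonempty := by
    intro t ht
    let p : Fin (4 * l) := ⟨2 * t + e, by
      simp only [Set.mem_Iio] at ht; rw [he]; split <;> omega⟩
    let top : Fin (2 * l) × Fin (4 * l) := (⟨2 * j, by omega⟩, p)
    let bot : Fin (2 * l) × Fin (4 * l) := (⟨2 * i, by omega⟩, p)
    have hreach : ReflTransGen
        (fun u v => elemWallAdj l u v ∧ u.2.val = p.val ∧ v.2.val = p.val) top bot := by
      by_cases hij : i < j
      · exact reflTransGen_column_down p (by simp [p, e, hij]) (by simp; omega)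
      · exact reflTransGen_column_up p (by simp [p, e, hij]) (by simp; omega)
    exact h.inter_nonempty_of_reachableWithin (W.reachableWithin_toFun _ hreach)
      (hQj (toFun_mem_wallCycleVerts W top (by simp [top]))).2
      (hQi (toFun_mem_wallCycleVerts W bot (by simp [bot]))).1
  have := Set.ncard_le_ncard_of_pairwiseDisjoint (Set.toFinite _)
    (((W.pairwise_disjoint_vertsOver fun u => u.2.val).comp_of_injective
      (f := fun t => 2 * t + e) fun a b hab => by simp only at hab; omega).set_pairwise _)
    hcolumn
  rwa [Set.ncard_Iio_nat] at this

theorem exists_wallCycleVerts_subset [Finite V] (h : IsDirSep D A B) (hAB : (A ∩ B).ncard < l) :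
    (∃ i < l, wallCycleVerts W i ⊆ A \ B) ∨ ∃ i < l, wallCycleVerts W i ⊆ B \ A := by
  obtain ⟨i, hi, hdisj⟩ := exists_wallCycleVerts_disjoint W hAB
  exact (h.wallCycleVerts_subset_or hdisj).imp (⟨i, hi, ·⟩) (⟨i, hi, ·⟩)

theorem not_exists_wallCycleVerts_subset [Finite V] (h : IsDirSep D A B)
    (hAB : (A ∩ B).ncard < 2 * l) (hB : ∃ j < l, wallCycleVerts W j ⊆ B \ A) :
    ¬∃ i < l, wallCycleVerts W i ⊆ A \ B := by
  rintro ⟨i, hi, hA⟩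
  obtain ⟨j, hj, hB⟩ := hB
  exact absurd (h.two_mul_le_ncard_inter hi hj hA hB) (by omega)

theorem xor_exists_wallCycleVerts_subset [Finite V] (h : IsDirSep D A B)
    (hAB : (A ∩ B).ncard < l) :
    Xor (∃ i < l, wallCycleVerts W i ⊆ A \ B) (∃ i < l, wallCycleVerts W i ⊆ B \ A) :=
  (xor_iff_or_and_not_and _ _).2 ⟨h.exists_wallCycleVerts_subset hAB,
    fun ⟨hA, hB⟩ => h.not_exists_wallCycleVerts_subset (by omega) hB hA⟩

end IsDirSep

variable {A B : Set V}

open scoped Classical in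
noncomputable def wallBigSide (p : Set V × Set V) : Set V :=
  if ∃ i < l, wallCycleVerts W i ⊆ p.1 \ p.2 then p.1 else p.2

open scoped Classical in
noncomputable def wallSmallSide (p : Set V × Set V) : Set V :=
  if ∃ i < l, wallCycleVerts W i ⊆ p.1 \ p.2 then p.2 else p.1

theorem IsDirSep.disjoint_wallSmallSide [Finite V] (h : IsDirSep D A B)
    (hAB : (A ∩ B).ncard < l) {i : ℕ} (hi : i < l)
    (hdisj : Disjoint (wallCycleVerts W i) (A ∩ B)) :
    Disjoint (wallCycleVerts W i) (wallSmallSide W (A, B)) := by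
  rcases h.wallCycleVerts_subset_or hdisj with hA | hB
  · rw [wallSmallSide, if_pos ⟨i, hi, hA⟩]
    exact Set.disjoint_of_subset_left hA Set.disjoint_sdiff_left
  · rw [wallSmallSide, if_neg (h.not_exists_wallCycleVerts_subset (by omega) ⟨i, hi, hB⟩)]
    exact Set.disjoint_of_subset_left hB Set.disjoint_sdiff_left

noncomputable def wallTangle [Finite V] (k : ℕ) (hkl : 3 * k ≤ l) : Tangle D k where
  big := wallBigSide W
  small := wallSmallSide W
  sides A B _ _ := by
    by_cases hA : ∃ i < l, wallCycleVerts W i ⊆ A \ B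
    · exact Or.inl ⟨if_pos hA, if_pos hA⟩
    · exact Or.inr ⟨if_neg hA, if_neg hA⟩
  not_three_cover A₁ B₁ A₂ B₂ A₃ B₃ h₁ o₁ h₂ o₂ h₃ o₃ hcover := by
    have hsep : ((A₁ ∩ B₁) ∪ (A₂ ∩ B₂) ∪ (A₃ ∩ B₃)).ncard < l := by
      have := Set.ncard_union_le ((A₁ ∩ B₁) ∪ (A₂ ∩ B₂)) (A₃ ∩ B₃)
      have := Set.ncard_union_le (A₁ ∩ B₁) (A₂ ∩ B₂)
      omega
    obtain ⟨i, hi, hdisj⟩ := exists_wallCycleVerts_disjoint W hsep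
    simp only [Set.disjoint_union_right] at hdisj
    have hsmall := Set.disjoint_union_right.2 ⟨Set.disjoint_union_right.2
      ⟨h₁.disjoint_wallSmallSide W (by omega) hi hdisj.1.1,
        h₂.disjoint_wallSmallSide W (by omega) hi hdisj.1.2⟩,
      h₃.disjoint_wallSmallSide W (by omega) hi hdisj.2⟩
    rw [hcover, Set.disjoint_univ] at hsmall
    exact (wallCycleVerts_nonempty W hi).ne_empty hsmall

end Wall

theorem wall_induces_tangle_general
    (V : Type) [Fintype V] (D : V → V → Prop)
    (k l : ℕ) (hl : 3 * k ≤ l)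
    (W : SubdivEmbedding (elemWallAdj l) D) :
    (∀ A B : Set V, IsDirSep D A B → (A ∩ B).ncard < k →
        Xor' (∃ i < l, wallCycleVerts W i ⊆ A \ B)
          (∃ i < l, wallCycleVerts W i ⊆ B \ A)) ∧
      ∃ T : Tangle D k,
        ∀ A B : Set V, IsDirSep D A B → (A ∩ B).ncard < k →
          ((∃ i < l, wallCycleVerts W i ⊆ A \ B) →
              T.big (A, B) = A ∧ T.small (A, B) = B) ∧
          ((∃ i < l, wallCycleVerts W i ⊆ B \ A) →
              T.big (A, B) = B ∧ T.small (A, B) = A) := by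
  refine ⟨fun A B h hAB => h.xor_exists_wallCycleVerts_subset (by omega), wallTangle W k hl,
    fun A B h hAB => ⟨fun hA => ⟨if_pos hA, if_pos hA⟩, fun hB => ?_⟩⟩
  have hA := h.not_exists_wallCycleVerts_subset (by omega) hB
  exact ⟨if_neg hA, if_neg hA⟩

/-- **A large cylindrical wall induces a tangle.**  Let `W` be a cylindrical wall of
order `l ≥ 3k` contained in `D`, with concentric dicycles `Q_1, …, Q_l`.  Then for every
directed separation `(A,B)` of order less than `k` exactly one side `X ∈ {A,B}` is such
that `X ∖ (A ∩ B)` contains the entire vertex set of some cycle `Q_i`, and the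
orientation mapping every such separation to this side is a tangle of order `k`. -/
theorem wall_induces_tangle
    (V : Type) [Fintype V] (D : V → V → Prop) (hD : Irreflexive D)
    (k l : ℕ) (hk : 1 ≤ k) (hl : 3 * k ≤ l)
    (W : SubdivEmbedding (elemWallAdj l) D) :
    (∀ A B : Set V, IsDirSep D A B → (A ∩ B).ncard < k →
        Xor' (∃ i < l, wallCycleVerts W i ⊆ A \ B)
          (∃ i < l, wallCycleVerts W i ⊆ B \ A)) ∧
      ∃ T : Tangle D k,
        ∀ A B : Set V, IsDirSep D A B → (A ∩ B).ncard < k →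
          ((∃ i < l, wallCycleVerts W i ⊆ A \ B) →
              T.big (A, B) = A ∧ T.small (A, B) = B) ∧
          ((∃ i < l, wallCycleVerts W i ⊆ B \ A) →
              T.big (A, B) = B ∧ T.small (A, B) = A) :=
  wall_induces_tangle_general V D k l hl W
end
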